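/- Let n ∈ ℕ and z₁, …, zₙ ∈ ℂ, and let f := (1 + (z₁𝐣)t)·(1 + (z₂𝐣)t)·⋯·(1 + (zₙ𝐣)t) ∈ ℍ[t], the product taken in increasing order of the index. Then f̄·f = ∏_{k=1}^{n} (1 + |z_k|²·t²), where the right-hand side is a polynomial with real coefficients regarded as quaternions. -/

import Mathlib

/-!
Conjugation reverses products, so `f̄ f` collapses from the middle outwards: for a pure
quaternion `a` the innermost pair is `(1 - a t)(1 + a t) = 1 + |a|² t²`, a real polynomial, and
real polynomials are central in `ℍ[t]`, so it can be moved out and the next pair exposed.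
-/

open Polynomial

/-- The quaternion `z𝐣 = x𝐣 + y𝐤` for a complex number `z = x + iy`. -/
def toQj (z : ℂ) : Quaternion ℝ := ⟨0, 0, z.re, z.im⟩

/-- The conjugate polynomial `f̄`, obtained by applying quaternionic conjugation
to each coefficient of `f`. -/
noncomputable def pconj (f : Polynomial (Quaternion ℝ)) : Polynomial (Quaternion ℝ) :=
  ∑ k ∈ Finset.range (f.natDegree + 1), Polynomial.C (star (f.coeff k)) * Polynomial.X ^ k

theorem one_add_C_mul_X_mul_one_add_C_mul_X {R : Type*} [Semiring R] (a b : R) :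
    (1 + C a * X) * (1 + C b * X) = 1 + C (a + b) * X + C (a * b) * X ^ 2 := by
  have h : C a * X * (C b * X) = C (a * b) * X ^ 2 := by
    rw [mul_assoc, ← mul_assoc X, X_mul_C, mul_assoc, ← sq, ← mul_assoc, ← C_mul]
  rw [mul_add, add_mul, add_mul, one_mul, mul_one, one_mul, h, C_add, add_mul]
  abel

theorem commute_map_algebraMap {R A : Type*} [CommSemiring R] [Semiring A] [Algebra R A]
    (p : R[X]) (q : A[X]) : Commute (p.map (algebraMap R A)) q :=
  letI := Polynomial.algebra (R := R) (A := A)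
  Algebra.commutes p q

open scoped Quaternion

theorem coeff_pconj (f : ℍ[ℝ][X]) (m : ℕ) : (pconj f).coeff m = star (f.coeff m) := by
  rw [pconj, finsetSum_coeff]
  simp_rw [coeff_C_mul_X_pow]
  rw [Finset.sum_ite_eq]
  split_ifs with hm
  · rfl
  · rw [coeff_eq_zero_of_natDegree_lt (by simpa [Nat.lt_succ_iff] using hm), star_zero]

theorem pconj_one : pconj 1 = 1 := by
  ext m : 1
  rw [coeff_pconj, coeff_one]
  split_ifs <;> simp

theorem pconj_mul (f g : ℍ[ℝ][X]) : pconj (f * g) = pconj g * pconj f := by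
  ext m : 1
  rw [coeff_pconj, coeff_mul, coeff_mul, star_sum, ← Finset.Nat.sum_antidiagonal_swap]
  simp [coeff_pconj, star_mul]

theorem pconj_one_add_C_mul_X (a : ℍ[ℝ]) : pconj (1 + C a * X) = 1 + C (star a) * X := by
  ext m : 1
  rw [coeff_pconj]
  rcases m with _ | _ | m <;> simp [coeff_one]

theorem pconj_mul_self_one_add_C_mul_X (a : ℍ[ℝ]) :
    pconj (1 + C a * X) * (1 + C a * X) =
      (1 + C (2 * a.re) * X + C (Quaternion.normSq a) * X ^ 2).map (algebraMap ℝ ℍ[ℝ]) := by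
  rw [pconj_one_add_C_mul_X, one_add_C_mul_X_mul_one_add_C_mul_X, Quaternion.star_add_self',
    Quaternion.star_mul_self]
  simp [Quaternion.algebraMap_def]

theorem pconj_list_prod_mul_self {ι : Type*} (l : List ι) (f : ι → ℍ[ℝ][X]) (g : ι → ℝ[X])
    (h : ∀ i ∈ l, pconj (f i) * f i = (g i).map (algebraMap ℝ ℍ[ℝ])) :
    pconj (l.map f).prod * (l.map f).prod = (l.map g).prod.map (algebraMap ℝ ℍ[ℝ]) := by
  induction l with
  | nil => simp [pconj_one]
  | cons i l ih =>
    have hl := ih fun j hj => h j (List.mem_cons_of_mem i hj)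
    simp only [List.map_cons, List.prod_cons, Polynomial.map_mul, pconj_mul]
    calc pconj (l.map f).prod * pconj (f i) * (f i * (l.map f).prod)
        = pconj (l.map f).prod * (pconj (f i) * f i) * (l.map f).prod := by
          simp only [mul_assoc]
      _ = (g i).map (algebraMap ℝ ℍ[ℝ]) * (pconj (l.map f).prod * (l.map f).prod) := by
          rw [h i List.mem_cons_self, (commute_map_algebraMap _ _).symm.eq, mul_assoc]
      _ = _ := by rw [hl]

theorem re_toQj (z : ℂ) : (toQj z).re = 0 := rfl

theorem normSq_toQj (z : ℂ) : Quaternion.normSq (toQj z) = Complex.normSq z := by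
  rw [Quaternion.normSq_def', Complex.normSq_apply]
  simp only [toQj]
  ring

/-- The companion polynomial of `f = (1 + (z₁𝐣)t) ⋯ (1 + (zₙ𝐣)t)` is
`f̄ f = ∏ₖ (1 + |z_k|² t²)`, a real polynomial regarded as a quaternionic one. -/
theorem companion_of_edge_product (n : ℕ) (z : Fin n → ℂ) :
    pconj (((List.finRange n).map fun k => 1 + C (toQj (z k)) * X).prod) *
        (((List.finRange n).map fun k => 1 + C (toQj (z k)) * X).prod) =
      (∏ k : Fin n, (1 + C (Complex.normSq (z k)) * X ^ 2) : Polynomial ℝ).map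
        (algebraMap ℝ (Quaternion ℝ)) := by
  rw [Fin.prod_univ_def]
  refine pconj_list_prod_mul_self _ _ _ fun k _ => ?_
  rw [pconj_mul_self_one_add_C_mul_X, re_toQj, normSq_toQj, mul_zero, C_0, zero_mul, add_zero]
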